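/- Let ι be a type and p₁, p₂, p₃, p₄ ≥ 0 with p₁ + p₂ + p₃ ≤ 1. Let μ₁, μ₂, μ₃ be probability mass functions on Finset ι that are locally decaying with rates p₁, p₂, p₃, and let μ₄ be a probability mass function on Finset (ι × Bool) that is locally decaying with rate p₄; consider the product distribution on quadruples (S_D, S_A, F, S_M) (i.e., all four random subsets are independent). Model the qubits of the two code blocks as ι × Bool and define the total output error support S = ((S_D ∪ S_A ∪ F) ×ˢ {false, true}) ∪ S_M. Then for every finite subset E of ι × Bool, the probability that E ⊆ S is at most (Real.sqrt (p₁ + p₂ + p₃) + p₄)^{E.card}. That is, the effective error on the two blocks after the faulty transversal Bell-measurement circuit is locally decaying with rate p_eff = √(p₁+p₂+p₃) + p₄. -/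

import Mathlib

open scoped ENNReal

/-- A probability mass function `μ` on finite subsets of `ι` is *locally decaying*
with rate `τ` if for every finite `B ⊆ ι` the probability that `B` is contained in
the random subset is at most `τ ^ |B|`. -/
def LocallyDecaying {ι : Type*} [DecidableEq ι] (μ : PMF (Finset ι)) (τ : ℝ) : Prop :=
  ∀ B : Finset ι,
    (∑' S : Finset ι, if B ⊆ S then μ S else 0) ≤ ENNReal.ofReal (τ ^ B.card)

/-!
Independent locally decaying random sets of rates `a` and `b` have a locally decaying union of
rate `a + b`: split `B` according to the part `C` covered by the first set, factor the
probability by independence, and sum `a ^ |C| * b ^ |B \ C|` over `C ⊆ B` by the binomial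
theorem. So `S_D ∪ S_A ∪ F` has rate `p₁ + p₂ + p₃ ≤ 1`; doubling it across the two blocks
gives rate `√(p₁ + p₂ + p₃)`, because a set `E` of qubits lies over at least `|E| / 2` edges,
and the final union with `S_M` adds `p₄`.
-/

theorem Finset.sum_powerset_pow_mul_pow {α R : Type*} [DecidableEq α] [CommSemiring R]
    (x y : R) (s : Finset α) :
    ∑ t ∈ s.powerset, x ^ t.card * y ^ (s \ t).card = (x + y) ^ s.card := by
  simp only [← Finset.prod_const, ← Finset.prod_add]

theorem ite_subset_union_le_sum_powerset {α : Type*} [DecidableEq α] (B S T : Finset α)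
    (c : ℝ≥0∞) :
    (if B ⊆ S ∪ T then c else 0) ≤ ∑ C ∈ B.powerset, if C ⊆ S ∧ B \ C ⊆ T then c else 0 := by
  split_ifs with h
  · have hcover : B ∩ S ⊆ S ∧ B \ (B ∩ S) ⊆ T := by
      refine ⟨Finset.inter_subset_right, fun x hx => ?_⟩
      simp only [Finset.mem_sdiff, Finset.mem_inter, not_and] at hx
      simpa [hx.2 hx.1] using h hx.1
    calc c = if B ∩ S ⊆ S ∧ B \ (B ∩ S) ⊆ T then c else 0 := (if_pos hcover).symm
      _ ≤ _ := Finset.single_le_sum (f := fun C => if C ⊆ S ∧ B \ C ⊆ T then c else 0)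
          (fun _ _ => zero_le) (Finset.mem_powerset.2 Finset.inter_subset_left)
  · exact zero_le

/-- The random set `X x`, `x` drawn with weights `w`, is locally decaying with rate `a`;
`LocallyDecaying μ τ` is the case `X = id`, `w = μ`, `a = ofReal τ`. -/
def LocallyDecayingFamily {α β : Type*} [DecidableEq α] (w : β → ℝ≥0∞) (X : β → Finset α)
    (a : ℝ≥0∞) : Prop :=
  ∀ B : Finset α, ∑' x, (if B ⊆ X x then w x else 0) ≤ a ^ B.card

namespace LocallyDecayingFamily

variable {α β γ : Type*} [DecidableEq α]

theorem union {v : β → ℝ≥0∞} {w : γ → ℝ≥0∞} {X : β → Finset α} {Y : γ → Finset α}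
    {a b : ℝ≥0∞} (hX : LocallyDecayingFamily v X a) (hY : LocallyDecayingFamily w Y b) :
    LocallyDecayingFamily (fun p : β × γ => v p.1 * w p.2) (fun p => X p.1 ∪ Y p.2)
      (a + b) := by
  intro B
  calc ∑' p : β × γ, (if B ⊆ X p.1 ∪ Y p.2 then v p.1 * w p.2 else 0)
      ≤ ∑' p : β × γ, ∑ C ∈ B.powerset,
          if C ⊆ X p.1 ∧ B \ C ⊆ Y p.2 then v p.1 * w p.2 else 0 :=
        ENNReal.tsum_le_tsum fun p => ite_subset_union_le_sum_powerset _ _ _ _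
    _ = ∑ C ∈ B.powerset, (∑' x, if C ⊆ X x then v x else 0) *
          ∑' y, if B \ C ⊆ Y y then w y else 0 := by
        rw [Summable.tsum_finsetSum fun _ _ => ENNReal.summable]
        refine Finset.sum_congr rfl fun C _ => ?_
        simp only [← ite_zero_mul_ite_zero]
        rw [ENNReal.tsum_prod', ← ENNReal.tsum_mul_right]
        simp only [ENNReal.tsum_mul_left]
    _ ≤ ∑ C ∈ B.powerset, a ^ C.card * b ^ (B \ C).card :=
        Finset.sum_le_sum fun C _ => mul_le_mul' (hX C) (hY (B \ C))
    _ = (a + b) ^ B.card := Finset.sum_powerset_pow_mul_pow a b B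

theorem product_right {w : β → ℝ≥0∞} {X : β → Finset α} {a : ℝ≥0∞} (T : Finset γ)
    [DecidableEq γ] (hX : LocallyDecayingFamily w X (a ^ T.card)) (ha : a ≤ 1) :
    LocallyDecayingFamily w (fun x => X x ×ˢ T) a := by
  intro E
  by_cases hE : E ⊆ E.image Prod.fst ×ˢ T
  · have hcard : E.card ≤ T.card * (E.image Prod.fst).card := by
      simpa [mul_comm] using Finset.card_le_card hE
    calc ∑' x, (if E ⊆ X x ×ˢ T then w x else 0)
        ≤ ∑' x, (if E.image Prod.fst ⊆ X x then w x else 0) := by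
          refine ENNReal.tsum_le_tsum fun x => ?_
          by_cases h : E ⊆ X x ×ˢ T
          · rw [if_pos h, if_pos ((Finset.image_subset_image h).trans
              Finset.subset_product_image_fst)]
          · rw [if_neg h]
            exact zero_le
      _ ≤ (a ^ T.card) ^ (E.image Prod.fst).card := hX _
      _ ≤ a ^ E.card := by
          rw [← pow_mul]
          exact pow_le_pow_of_le_one zero_le ha hcard
  · have hnever : ∀ x, ¬ E ⊆ X x ×ˢ T := fun x h => hE fun e he =>
      Finset.mem_product.2 ⟨Finset.mem_image_of_mem _ he, (Finset.mem_product.1 (h he)).2⟩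
    simp [hnever]

end LocallyDecayingFamily

theorem LocallyDecaying.family {ι : Type*} [DecidableEq ι] {μ : PMF (Finset ι)} {τ : ℝ}
    (hμ : LocallyDecaying μ τ) (hτ : 0 ≤ τ) :
    LocallyDecayingFamily μ id (ENNReal.ofReal τ) := fun B => by
  simpa [ENNReal.ofReal_pow hτ] using hμ B

theorem ofReal_add_add_eq_ofReal_sqrt_pow {p₁ p₂ p₃ : ℝ} (hp₁ : 0 ≤ p₁) (hp₂ : 0 ≤ p₂)
    (hp₃ : 0 ≤ p₃) :
    ENNReal.ofReal p₁ + ENNReal.ofReal p₂ + ENNReal.ofReal p₃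
      = ENNReal.ofReal (Real.sqrt (p₁ + p₂ + p₃)) ^ ({false, true} : Finset Bool).card := by
  rw [← ENNReal.ofReal_add hp₁ hp₂, ← ENNReal.ofReal_add (by positivity) hp₃,
    ← ENNReal.ofReal_pow (Real.sqrt_nonneg _)]
  simp [Real.sq_sqrt (by positivity : 0 ≤ p₁ + p₂ + p₃)]

/-- **Lemma 1: error propagation through the transversal Bell measurement circuit.**
The qubits of the two code blocks are modeled as `ι × Bool`.  With independent
locally decaying random subsets `S_D, S_A, F ⊆ ι` of rates `p₁, p₂, p₃ ≥ 0`
(`p₁ + p₂ + p₃ ≤ 1`) and an independent locally decaying measurement-error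
support `S_M ⊆ ι × Bool` of rate `p₄ ≥ 0`, the total output error support is
contained in `S = ((S_D ∪ S_A ∪ F) ×ˢ {false, true}) ∪ S_M`, and for every
finite `E ⊆ ι × Bool` the probability that `E ⊆ S` is at most
`(√(p₁ + p₂ + p₃) + p₄) ^ |E|`; i.e. the effective noise rate is
`p_eff = √(p₁ + p₂ + p₃) + p₄`. -/
theorem locallyDecaying_knill_bell_measurement {ι : Type*} [DecidableEq ι]
    (p₁ p₂ p₃ p₄ : ℝ) (hp₁ : 0 ≤ p₁) (hp₂ : 0 ≤ p₂) (hp₃ : 0 ≤ p₃) (hp₄ : 0 ≤ p₄)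
    (hsum : p₁ + p₂ + p₃ ≤ 1)
    (μ₁ μ₂ μ₃ : PMF (Finset ι)) (μ₄ : PMF (Finset (ι × Bool)))
    (hμ₁ : LocallyDecaying μ₁ p₁) (hμ₂ : LocallyDecaying μ₂ p₂)
    (hμ₃ : LocallyDecaying μ₃ p₃) (hμ₄ : LocallyDecaying μ₄ p₄) :
    ∀ E : Finset (ι × Bool),
      (∑' SD : Finset ι, ∑' SA : Finset ι, ∑' F : Finset ι,
          ∑' SM : Finset (ι × Bool),
          if E ⊆ ((SD ∪ SA ∪ F) ×ˢ ({false, true} : Finset Bool)) ∪ SM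
          then μ₁ SD * μ₂ SA * μ₃ F * μ₄ SM else 0)
        ≤ ENNReal.ofReal ((Real.sqrt (p₁ + p₂ + p₃) + p₄) ^ E.card) := by
  intro E
  have hinput := ((hμ₁.family hp₁).union (hμ₂.family hp₂)).union (hμ₃.family hp₃)
  rw [ofReal_add_add_eq_ofReal_sqrt_pow hp₁ hp₂ hp₃] at hinput
  have hsqrt : ENNReal.ofReal (Real.sqrt (p₁ + p₂ + p₃)) ≤ 1 :=
    ENNReal.ofReal_le_one.2 (Real.sqrt_le_one.2 hsum)
  have houtput := (hinput.product_right _ hsqrt).union (hμ₄.family hp₄) E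
  simp only [ENNReal.tsum_prod', id] at houtput
  rwa [ENNReal.ofReal_pow (by positivity), ENNReal.ofReal_add (Real.sqrt_nonneg _) hp₄]
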